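/- Consider the censored GPD log-likelihood l(ξ, σ) = D log(1 - G(T_u; ξ, σ)) + (1 - D) log g(Y; ξ, σ) where D = 1[Y > T_u], Y has the GPD(ξ, σ) with ξ > 0, and T_u > 0. With z = 1 + ξT_u/σ, the Fisher information entry E[-∂²l/∂σ²] equals (1 - z^{-2-1/ξ}) / ((1 + 2ξ)σ²). -/

import Mathlib

open MeasureTheory

/-- GPD CDF. -/
noncomputable def gpdCDF (ξ σ y : ℝ) : ℝ := 1 - (1 + ξ * y / σ) ^ (-1/ξ)

/-- GPD density. -/
noncomputable def gpdPDF (ξ σ y : ℝ) : ℝ := σ⁻¹ * (1 + ξ * y / σ) ^ (-1 - 1/ξ)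

/-- Censored (Tobit) GPD log-likelihood: l(ξ,σ) = D log(1 - G(T_u)) + (1-D) log g(Y)
with D = 1[Y > T_u]. -/
noncomputable def cll (Tu ξ σ y : ℝ) : ℝ :=
  if Tu < y then Real.log (1 - gpdCDF ξ σ Tu) else Real.log (gpdPDF ξ σ y)

open Filter Set Real Topology

/-! With `a = ξ T_u` above the threshold and `a = ξ y` below it, `l` is locally in `σ` of the form
`α log (σ + a) + ξ⁻¹ log σ` (with `α = -ξ⁻¹`, resp. `-1 - ξ⁻¹`), so
`-∂²l/∂σ² = 1/(ξσ²) - c/(σ + ξ min(y, T_u))²` with `c = ξ⁻¹`, resp. `1 + ξ⁻¹`. Splitting the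
expectation at `T_u`, the CDF `G` is an antiderivative of `g` and
`-(1 + ξy/σ)^(-2-1/ξ) / ((1+2ξ)σ²)` one of `g(y)/(σ+ξy)²`, so everything is a power of `z`. -/

theorem deriv_deriv_mul_log_add_add_mul_log (α β a : ℝ) {s : ℝ} (hs : s ≠ 0) (hsa : s + a ≠ 0) :
    deriv (deriv fun t => α * log (t + a) + β * log t) s = -(α / (s + a) ^ 2) - β / s ^ 2 := by
  have hderiv : deriv (fun t => α * log (t + a) + β * log t) =ᶠ[𝓝 s]
      fun t => α * (t + a)⁻¹ + β * t⁻¹ := by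
    filter_upwards [eventually_ne_nhds hs,
      (continuous_add_const a).continuousAt.eventually_ne hsa] with t ht hta
    exact ((((hasDerivAt_id t).add_const a).log hta).const_mul α
      |>.add ((hasDerivAt_log ht).const_mul β)).deriv.trans (by simp [div_eq_mul_inv])
  rw [hderiv.deriv_eq]
  refine ((((hasDerivAt_id s).add_const a).inv hsa).const_mul α
    |>.add ((hasDerivAt_inv hs).const_mul β)).deriv.trans ?_
  simp only [id_eq]
  ring

theorem integrableOn_Ioc_and_integral_eq_of_hasDerivAt_of_nonneg {f f' : ℝ → ℝ} {a b : ℝ}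
    (hab : a ≤ b) (hderiv : ∀ x ∈ Icc a b, HasDerivAt f (f' x) x) (hnonneg : ∀ x ∈ Ioo a b, 0 ≤ f' x) :
    IntegrableOn f' (Ioc a b) ∧ ∫ x in Ioc a b, f' x = f b - f a := by
  have hcont : ContinuousOn f (Icc a b) := fun x hx =>
    (hderiv x hx).continuousAt.continuousWithinAt
  have hderiv' : ∀ x ∈ Ioo a b, HasDerivAt f (f' x) x := fun x hx =>
    hderiv x (Ioo_subset_Icc_self hx)
  have hint := intervalIntegral.integrableOn_deriv_of_nonneg hcont hderiv' hnonneg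
  refine ⟨hint, ?_⟩
  rw [← intervalIntegral.integral_of_le hab]
  exact intervalIntegral.integral_eq_sub_of_hasDerivAt_of_le hab hcont hderiv'
    ((intervalIntegrable_iff_integrableOn_Ioc_of_le hab).2 hint)

section GPD

variable {ξ σ : ℝ}

theorem log_one_sub_gpdCDF {y : ℝ} (hσ : 0 < σ) (hy : 0 < σ + ξ * y) :
    log (1 - gpdCDF ξ σ y) = -1 / ξ * log (σ + ξ * y) + 1 / ξ * log σ := by
  have hu : 1 + ξ * y / σ = (σ + ξ * y) / σ := by field_simp
  rw [gpdCDF, sub_sub_cancel, hu, log_rpow (div_pos hy hσ), log_div hy.ne' hσ.ne']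
  ring

theorem log_gpdPDF {y : ℝ} (hσ : 0 < σ) (hy : 0 < σ + ξ * y) :
    log (gpdPDF ξ σ y) = (-1 - 1 / ξ) * log (σ + ξ * y) + 1 / ξ * log σ := by
  have hu : 1 + ξ * y / σ = (σ + ξ * y) / σ := by field_simp
  have hpos : 0 < ((σ + ξ * y) / σ) ^ (-1 - 1 / ξ) := rpow_pos_of_pos (div_pos hy hσ) _
  rw [gpdPDF, hu, log_mul (inv_ne_zero hσ.ne') hpos.ne', log_inv, log_rpow (div_pos hy hσ),
    log_div hy.ne' hσ.ne']
  ring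

theorem hasDerivAt_one_add_mul_div_rpow (r : ℝ) {y : ℝ} (hy : 0 < 1 + ξ * y / σ) :
    HasDerivAt (fun y => (1 + ξ * y / σ) ^ r) (r * (ξ / σ) * (1 + ξ * y / σ) ^ (r - 1)) y := by
  have hu : HasDerivAt (fun y => 1 + ξ * y / σ) (ξ / σ) y := by
    simpa using (((hasDerivAt_id y).const_mul ξ).div_const σ).const_add 1
  exact (hu.rpow_const (Or.inl hy.ne')).congr_deriv (by ring)

theorem hasDerivAt_gpdCDF (hξ : ξ ≠ 0) {y : ℝ} (hy : 0 < 1 + ξ * y / σ) :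
    HasDerivAt (gpdCDF ξ σ) (gpdPDF ξ σ y) y := by
  refine ((hasDerivAt_one_add_mul_div_rpow (-1 / ξ) hy).const_sub 1).congr_deriv ?_
  rw [gpdPDF, show -1 / ξ - 1 = -1 - 1 / ξ by ring]
  field_simp

theorem gpdPDF_nonneg (hσ : 0 ≤ σ) {y : ℝ} (hy : 0 ≤ 1 + ξ * y / σ) : 0 ≤ gpdPDF ξ σ y :=
  mul_nonneg (inv_nonneg.2 hσ) (rpow_nonneg hy _)

theorem tendsto_gpdCDF_atTop (hξ : 0 < ξ) (hσ : 0 < σ) : Tendsto (gpdCDF ξ σ) atTop (𝓝 1) := by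
  have hu : Tendsto (fun y => 1 + ξ * y / σ) atTop atTop :=
    tendsto_atTop_add_const_left _ _ <|
      (tendsto_id.const_mul_atTop (div_pos hξ hσ)).congr fun y => by simp [mul_div_right_comm]
  have h := ((tendsto_rpow_neg_atTop (one_div_pos.2 hξ)).comp hu).const_sub (1 : ℝ)
  rw [sub_zero] at h
  exact h.congr fun y => by simp [gpdCDF, neg_div]

theorem integrableOn_Ioi_gpdPDF (hξ : 0 < ξ) (hσ : 0 < σ) {T : ℝ} (hT : 0 ≤ T) :
    IntegrableOn (gpdPDF ξ σ) (Ioi T) :=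
  integrableOn_Ioi_deriv_of_nonneg'
    (fun y hy => hasDerivAt_gpdCDF hξ.ne' (by have := hT.trans hy; positivity))
    (fun y hy => gpdPDF_nonneg hσ.le (by have := hT.trans hy.le; positivity))
    (tendsto_gpdCDF_atTop hξ hσ)

theorem integral_Ioi_gpdPDF (hξ : 0 < ξ) (hσ : 0 < σ) {T : ℝ} (hT : 0 ≤ T) :
    ∫ y in Ioi T, gpdPDF ξ σ y = 1 - gpdCDF ξ σ T :=
  integral_Ioi_of_hasDerivAt_of_nonneg'
    (fun y hy => hasDerivAt_gpdCDF hξ.ne' (by have := hT.trans hy; positivity))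
    (fun y hy => gpdPDF_nonneg hσ.le (by have := hT.trans hy.le; positivity))
    (tendsto_gpdCDF_atTop hξ hσ)

theorem integrableOn_Ioc_gpdPDF_and_integral_eq (hξ : 0 < ξ) (hσ : 0 < σ) {T : ℝ} (hT : 0 ≤ T) :
    IntegrableOn (gpdPDF ξ σ) (Ioc 0 T) ∧ ∫ y in Ioc 0 T, gpdPDF ξ σ y = gpdCDF ξ σ T := by
  simpa [gpdCDF] using integrableOn_Ioc_and_integral_eq_of_hasDerivAt_of_nonneg hT
    (fun y hy => hasDerivAt_gpdCDF hξ.ne' (by have := hy.1; positivity))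
    (fun y hy => gpdPDF_nonneg hσ.le (by have := hy.1.le; positivity))

theorem gpdPDF_div_sq {y : ℝ} (hσ : σ ≠ 0) (hy : 0 < 1 + ξ * y / σ) :
    gpdPDF ξ σ y / (σ + ξ * y) ^ 2 = (σ ^ 3)⁻¹ * (1 + ξ * y / σ) ^ (-3 - 1 / ξ) := by
  have hσy : σ + ξ * y = σ * (1 + ξ * y / σ) := by field_simp
  rw [gpdPDF, hσy, show -1 - 1 / ξ = (-3 - 1 / ξ) + (2 : ℕ) by push_cast; ring,
    rpow_add_natCast hy.ne']
  generalize 1 + ξ * y / σ = u at hy ⊢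
  field_simp

theorem integrableOn_Ioc_gpdPDF_div_sq_and_integral_eq (hξ : 0 < ξ) (hσ : 0 < σ) {T : ℝ}
    (hT : 0 ≤ T) :
    IntegrableOn (fun y => gpdPDF ξ σ y / (σ + ξ * y) ^ 2) (Ioc 0 T) ∧
      ∫ y in Ioc 0 T, gpdPDF ξ σ y / (σ + ξ * y) ^ 2
        = (1 - (1 + ξ * T / σ) ^ (-2 - 1 / ξ)) / ((1 + 2 * ξ) * σ ^ 2) := by
  have hderiv : ∀ y ∈ Icc 0 T, HasDerivAt
      (fun y => -((1 + ξ * y / σ) ^ (-2 - 1 / ξ)) / ((1 + 2 * ξ) * σ ^ 2))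
      (gpdPDF ξ σ y / (σ + ξ * y) ^ 2) y := by
    intro y hy
    have hu : 0 < 1 + ξ * y / σ := by have := hy.1; positivity
    refine ((hasDerivAt_one_add_mul_div_rpow (-2 - 1 / ξ) hu).neg.div_const _).congr_deriv ?_
    rw [gpdPDF_div_sq hσ.ne' hu, show -2 - 1 / ξ - 1 = -3 - 1 / ξ by ring]
    field_simp
    ring
  have hnonneg : ∀ y ∈ Ioo 0 T, 0 ≤ gpdPDF ξ σ y / (σ + ξ * y) ^ 2 := fun y hy =>
    div_nonneg (gpdPDF_nonneg hσ.le (by have := hy.1.le; positivity)) (sq_nonneg _)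
  obtain ⟨hint, heq⟩ := integrableOn_Ioc_and_integral_eq_of_hasDerivAt_of_nonneg hT hderiv hnonneg
  refine ⟨hint, heq.trans ?_⟩
  simp only [mul_zero, zero_div, add_zero, one_rpow]
  ring

end GPD

theorem neg_deriv_deriv_cll {Tu ξ σ y : ℝ} (hσ : 0 < σ) (hTu : 0 < σ + ξ * Tu)
    (hy : 0 < σ + ξ * y) :
    -deriv (deriv fun s => cll Tu ξ s y) σ
      = 1 / ξ / σ ^ 2 - if Tu < y then 1 / ξ / (σ + ξ * Tu) ^ 2
          else (1 + 1 / ξ) / (σ + ξ * y) ^ 2 := by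
  have hpos : ∀ {c : ℝ}, 0 < σ + c → ∀ᶠ s in 𝓝 σ, 0 < s ∧ 0 < s + c := fun hc =>
    (eventually_gt_nhds hσ).and
      ((continuous_add_const _).continuousAt.eventually (eventually_gt_nhds hc))
  split_ifs with h
  · have hcll : (fun s => cll Tu ξ s y) =ᶠ[𝓝 σ]
        fun s => -1 / ξ * log (s + ξ * Tu) + 1 / ξ * log s := by
      filter_upwards [hpos hTu] with s hs
      simp only [cll, if_pos h, log_one_sub_gpdCDF hs.1 hs.2]
    rw [hcll.deriv.deriv_eq, deriv_deriv_mul_log_add_add_mul_log _ _ _ hσ.ne' hTu.ne']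
    ring
  · have hcll : (fun s => cll Tu ξ s y) =ᶠ[𝓝 σ]
        fun s => (-1 - 1 / ξ) * log (s + ξ * y) + 1 / ξ * log s := by
      filter_upwards [hpos hy] with s hs
      simp only [cll, if_neg h, log_gpdPDF hs.1 hs.2]
    rw [hcll.deriv.deriv_eq, deriv_deriv_mul_log_add_add_mul_log _ _ _ hσ.ne' hy.ne']
    ring

/-- With z = 1 + ξT_u/σ, the Fisher information entry
E[-∂²l/∂σ²] equals (1 - z^{-2-1/ξ}) / ((1+2ξ)σ²), where the expectation is with
respect to the GPD law of Y (expressed via its density on (0,∞)). -/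
theorem censored_gpd_fisher_sigma (ξ σ Tu : ℝ) (hξ : 0 < ξ) (hσ : 0 < σ) (hTu : 0 < Tu) :
    ∫ y in Set.Ioi (0:ℝ),
        (-(deriv (deriv (fun s => cll Tu ξ s y)) σ)) * gpdPDF ξ σ y
      = (1 - (1 + ξ * Tu / σ) ^ (-2 - 1/ξ)) / ((1 + 2*ξ) * σ^2) := by
  have hIoc : EqOn (fun y => -deriv (deriv fun s => cll Tu ξ s y) σ * gpdPDF ξ σ y)
      (fun y => 1 / ξ / σ ^ 2 * gpdPDF ξ σ y
        - (1 + 1 / ξ) * (gpdPDF ξ σ y / (σ + ξ * y) ^ 2)) (Ioc 0 Tu) := fun y hy => by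
    dsimp only
    rw [neg_deriv_deriv_cll hσ (by positivity) (by have := hy.1; positivity), if_neg hy.2.not_gt]
    ring
  have hIoi : EqOn (fun y => -deriv (deriv fun s => cll Tu ξ s y) σ * gpdPDF ξ σ y)
      (fun y => (1 / ξ / σ ^ 2 - 1 / ξ / (σ + ξ * Tu) ^ 2) * gpdPDF ξ σ y) (Ioi Tu) :=
    fun y hy => by
      dsimp only
      rw [neg_deriv_deriv_cll hσ (by positivity) (by have := hTu.trans hy; positivity),
        if_pos (mem_Ioi.1 hy)]
  obtain ⟨hint₀, hcdf⟩ := integrableOn_Ioc_gpdPDF_and_integral_eq hξ hσ hTu.le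
  obtain ⟨hint₂, hmoment⟩ := integrableOn_Ioc_gpdPDF_div_sq_and_integral_eq hξ hσ hTu.le
  have hint₁ := integrableOn_Ioi_gpdPDF hξ hσ hTu.le
  rw [← Ioc_union_Ioi_eq_Ioi hTu.le, setIntegral_union (Ioc_disjoint_Ioi le_rfl) measurableSet_Ioi
      (IntegrableOn.congr_fun ((hint₀.const_mul _).sub (hint₂.const_mul _)) hIoc.symm
        measurableSet_Ioc)
      (IntegrableOn.congr_fun (hint₁.const_mul _) hIoi.symm measurableSet_Ioi),
    setIntegral_congr_fun measurableSet_Ioc hIoc, setIntegral_congr_fun measurableSet_Ioi hIoi,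
    integral_sub (hint₀.const_mul _) (hint₂.const_mul _), integral_const_mul, integral_const_mul,
    integral_const_mul, hcdf, hmoment, integral_Ioi_gpdPDF hξ hσ hTu.le]
  have hz : 0 < 1 + ξ * Tu / σ := by positivity
  have hσz : σ + ξ * Tu = σ * (1 + ξ * Tu / σ) := by field_simp
  rw [gpdCDF, sub_sub_cancel, hσz, show -1 / ξ = (-2 - 1 / ξ) + (2 : ℕ) by push_cast; ring,
    rpow_add_natCast hz.ne']
  generalize (1 + ξ * Tu / σ) ^ (-2 - 1 / ξ) = w
  generalize 1 + ξ * Tu / σ = z at hz ⊢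
  field_simp
  ring
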